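/- Transport equation for the inverse foliation density: assume in addition that u is C² and L¹, …, Lⁿ are C¹ on Ω. Then μ is C¹ on Ω and satisfies L μ = Σ_{a=1}^n (X̆ L^a) ξ_a + μ Σ_{a=1}^n (L L^a) ξ_a on Ω; equivalently, L μ = μ² Σ_{a=1}^n (∂_t L^a)(∂_a u). (Equation (3.17) of the lemma 'Transport equations for μ, ξ_j, and ξ_j^{(Small)}'.) -/

import Mathlib

/-- Cartesian partial derivative `∂_α f` of a scalar function on `ℝ^m`. -/
noncomputable def pd {m : ℕ} (f : (Fin m → ℝ) → ℝ) (α : Fin m) (p : Fin m → ℝ) : ℝ :=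
  fderiv ℝ f p (Pi.single α 1)

/-!
Differentiating `1 / ∂_t u` gives `L μ = -μ² L(∂_t u)`. Since second derivatives of `u`
commute, `L (∂_t u) = ∂_t (L u) - Σ_a (∂_t L^a) ∂_a u`, and `∂_t (L u) = 0` because the
eikonal equation holds on an open set. This is the second form; the first one is the same
expression, because `X̆` is `-μ` times the spatial part of `L`, so that `X̆ L^a + μ L L^a = μ ∂_t L^a`.
-/

open Finset

section PartialDerivative

variable {m : ℕ} {f g : (Fin m → ℝ) → ℝ} {p : Fin m → ℝ}

theorem pd_add (hf : DifferentiableAt ℝ f p) (hg : DifferentiableAt ℝ g p) (α : Fin m) :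
    pd (fun q => f q + g q) α p = pd f α p + pd g α p := by
  simp only [pd, fderiv_fun_add hf hg, add_apply]

theorem pd_mul (hf : DifferentiableAt ℝ f p) (hg : DifferentiableAt ℝ g p) (α : Fin m) :
    pd (fun q => f q * g q) α p = f p * pd g α p + g p * pd f α p := by
  simp only [pd, fderiv_fun_mul hf hg, add_apply, smul_apply, smul_eq_mul]

theorem pd_sum {ι : Type*} {s : Finset ι} {F : ι → (Fin m → ℝ) → ℝ}
    (hF : ∀ i ∈ s, DifferentiableAt ℝ (F i) p) (α : Fin m) :
    pd (fun q => ∑ i ∈ s, F i q) α p = ∑ i ∈ s, pd (F i) α p := by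
  simp only [pd, fderiv_fun_sum hF, _root_.sum_apply]

theorem pd_comp {φ : ℝ → ℝ} {φ' : ℝ} (hφ : HasDerivAt φ φ' (f p))
    (hf : DifferentiableAt ℝ f p) (α : Fin m) :
    pd (φ ∘ f) α p = φ' * pd f α p := by
  simp [pd, (hφ.comp_hasFDerivAt p hf.hasFDerivAt).fderiv]

theorem pd_eq_zero_of_eventuallyEq_const {c : ℝ} (hf : f =ᶠ[nhds p] fun _ => c) (α : Fin m) :
    pd f α p = 0 := by
  simp [pd, hf.fderiv_eq]

theorem pd_eq_comp_fderiv (f : (Fin m → ℝ) → ℝ) (α : Fin m) :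
    pd f α = ContinuousLinearMap.apply ℝ ℝ (Pi.single α (1 : ℝ)) ∘ fderiv ℝ f :=
  rfl

theorem hasFDerivAt_pd (hf : DifferentiableAt ℝ (fderiv ℝ f) p) (α : Fin m) :
    HasFDerivAt (pd f α)
      ((ContinuousLinearMap.apply ℝ ℝ (Pi.single α 1)).comp (fderiv ℝ (fderiv ℝ f) p)) p :=
  pd_eq_comp_fderiv f α ▸ (ContinuousLinearMap.apply ℝ ℝ _).hasFDerivAt.comp p hf.hasFDerivAt

theorem differentiableAt_fderiv_of_contDiffAt_two (hf : ContDiffAt ℝ 2 f p) :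
    DifferentiableAt ℝ (fderiv ℝ f) p :=
  (hf.fderiv_right (m := 1) le_rfl).differentiableAt one_ne_zero

theorem differentiableAt_pd (hf : ContDiffAt ℝ 2 f p) (α : Fin m) :
    DifferentiableAt ℝ (pd f α) p :=
  (hasFDerivAt_pd (differentiableAt_fderiv_of_contDiffAt_two hf) α).differentiableAt

theorem pd_pd_comm (hf : ContDiffAt ℝ 2 f p) (α β : Fin m) :
    pd (pd f α) β p = pd (pd f β) α p := by
  have hd := differentiableAt_fderiv_of_contDiffAt_two hf
  rw [pd, pd, (hasFDerivAt_pd hd α).fderiv, (hasFDerivAt_pd hd β).fderiv]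
  exact (hf.isSymmSndFDerivAt (by simp)) _ _

theorem contDiffOn_pd {Ω : Set (Fin m → ℝ)} (hΩ : IsOpen Ω) {k : ℕ}
    (hf : ContDiffOn ℝ (k + 1) f Ω) (α : Fin m) : ContDiffOn ℝ k (pd f α) Ω :=
  pd_eq_comp_fderiv f α ▸ (ContinuousLinearMap.apply ℝ ℝ (Pi.single α 1)).contDiff.comp_contDiffOn
    (hf.fderiv_of_isOpen hΩ le_rfl)

end PartialDerivative

section Transport

variable {n : ℕ} {L : Fin n → (Fin (n + 1) → ℝ) → ℝ} {f : (Fin (n + 1) → ℝ) → ℝ}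
  {p : Fin (n + 1) → ℝ}

/-- `L = ∂_t + Σ_b L^b ∂_b`; with `b : Fin n`, the spatial coordinate paired with `L b` is
`x^{b.succ}`. -/
noncomputable def transport (L : Fin n → (Fin (n + 1) → ℝ) → ℝ) (f : (Fin (n + 1) → ℝ) → ℝ) :
    (Fin (n + 1) → ℝ) → ℝ :=
  fun p => pd f 0 p + ∑ b, L b p * pd f b.succ p

theorem transport_comp {φ : ℝ → ℝ} {φ' : ℝ} (hφ : HasDerivAt φ φ' (f p))
    (hf : DifferentiableAt ℝ f p) : transport L (φ ∘ f) p = φ' * transport L f p := by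
  simp only [transport, pd_comp hφ hf, mul_add, mul_sum]
  congr 1
  exact sum_congr rfl fun b _ => by ring

theorem pd_transport (hf : ContDiffAt ℝ 2 f p) (hL : ∀ b, DifferentiableAt ℝ (L b) p)
    (α : Fin (n + 1)) :
    pd (transport L f) α p = transport L (pd f α) p + ∑ b, pd (L b) α p * pd f b.succ p := by
  have hpd := differentiableAt_pd hf
  have hterm : ∀ b ∈ (univ : Finset (Fin n)),
      DifferentiableAt ℝ (fun q => L b q * pd f b.succ q) p :=
    fun b _ => (hL b).mul (hpd b.succ)
  unfold transport
  rw [pd_add (hpd 0) (DifferentiableAt.fun_sum hterm), pd_sum hterm,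
    pd_pd_comm hf]
  simp only [pd_mul (hL _) (hpd _), pd_pd_comm hf _ α, add_assoc, ← sum_add_distrib]
  exact congrArg _ (sum_congr rfl fun b _ => by ring)

end Transport

theorem sum_transversal_add_mu_transport_eq {n : ℕ} (μ : ℝ) (ℓ w : Fin n → ℝ)
    (D : Fin n → Fin (n + 1) → ℝ) :
    (∑ a, (μ * ∑ b, (-ℓ b) * D a b.succ) * (μ * w a))
        + μ * ∑ a, (D a 0 + ∑ b, ℓ b * D a b.succ) * (μ * w a)
      = μ ^ 2 * ∑ a, D a 0 * w a := by
  simp only [mul_sum, ← sum_add_distrib, neg_mul, sum_neg_distrib]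
  exact sum_congr rfl fun a _ => by ring

theorem mu_transport_equation_general {n : ℕ}
    (Ω : Set (Fin (n + 1) → ℝ)) (hΩ : IsOpen Ω)
    (L : Fin n → (Fin (n + 1) → ℝ) → ℝ)
    (u : (Fin (n + 1) → ℝ) → ℝ)
    (hu : ContDiffOn ℝ 2 u Ω)
    (hL : ∀ a : Fin n, ContDiffOn ℝ 1 (L a) Ω)
    (heik : ∀ p ∈ Ω, pd u 0 p + ∑ a : Fin n, L a p * pd u a.succ p = 0)
    (hpos : ∀ p ∈ Ω, 0 < pd u 0 p) :
    ContDiffOn ℝ 1 (fun p => 1 / pd u 0 p) Ω ∧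
    ∀ p ∈ Ω,
      (pd (fun q => 1 / pd u 0 q) 0 p
            + ∑ b : Fin n, L b p * pd (fun q => 1 / pd u 0 q) b.succ p
          = (∑ a : Fin n,
              ((1 / pd u 0 p) * ∑ b : Fin n, (-L b p) * pd (L a) b.succ p)
                * ((1 / pd u 0 p) * pd u a.succ p))
            + (1 / pd u 0 p)
              * ∑ a : Fin n,
                  (pd (L a) 0 p + ∑ b : Fin n, L b p * pd (L a) b.succ p)
                    * ((1 / pd u 0 p) * pd u a.succ p)) ∧
      (pd (fun q => 1 / pd u 0 q) 0 p
            + ∑ b : Fin n, L b p * pd (fun q => 1 / pd u 0 q) b.succ p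
          = (1 / pd u 0 p) ^ 2 * ∑ a : Fin n, pd (L a) 0 p * pd u a.succ p) := by
  refine ⟨contDiffOn_const.div (contDiffOn_pd hΩ hu 0) fun p hp => (hpos p hp).ne', ?_⟩
  intro p hp
  have hnhds := hΩ.mem_nhds hp
  have hup := hu.contDiffAt hnhds
  have hLp a := ((hL a).contDiffAt hnhds).differentiableAt one_ne_zero
  have hcomm := pd_transport hup hLp 0
  have hLu : transport L u =ᶠ[nhds p] fun _ => 0 := Filter.eventually_of_mem hnhds heik
  rw [pd_eq_zero_of_eventuallyEq_const hLu] at hcomm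
  have hμ : transport L (fun q => 1 / pd u 0 q) p
      = -((pd u 0 p) ^ 2)⁻¹ * transport L (pd u 0) p := by
    simp only [one_div]
    exact transport_comp (hasDerivAt_inv (hpos p hp).ne') (differentiableAt_pd hup 0)
  have hsecond : transport L (fun q => 1 / pd u 0 q) p
      = (1 / pd u 0 p) ^ 2 * ∑ a, pd (L a) 0 p * pd u a.succ p := by
    rw [hμ, eq_neg_of_add_eq_zero_left hcomm.symm, one_div, inv_pow]
    ring
  exact ⟨hsecond.trans (sum_transversal_add_mu_transport_eq (1 / pd u 0 p) (fun b => L b p)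
    (fun a => pd u a.succ p) (fun a β => pd (L a) β p)).symm, hsecond⟩

/-- Transport equation for the inverse foliation density.  If `u` is `C²`
and the `L^a` are `C¹` on `Ω`, then `μ = 1/∂_t u` is `C¹` on `Ω` and satisfies
`L μ = Σ_a (X̆ L^a) ξ_a + μ Σ_a (L L^a) ξ_a`; equivalently
`L μ = μ² Σ_a (∂_t L^a)(∂_a u)`.  Here `L f = ∂_t f + Σ_b L^b ∂_b f`,
`X̆ f = μ Σ_b (−L^b) ∂_b f`, and `ξ_a = μ ∂_a u`. -/
theorem mu_transport_equation {n : ℕ} (hn : 1 ≤ n)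
    (Ω : Set (Fin (n + 1) → ℝ)) (hΩ : IsOpen Ω)
    (L : Fin n → (Fin (n + 1) → ℝ) → ℝ)
    (u : (Fin (n + 1) → ℝ) → ℝ)
    (hu : ContDiffOn ℝ 2 u Ω)
    (hL : ∀ a : Fin n, ContDiffOn ℝ 1 (L a) Ω)
    (heik : ∀ p ∈ Ω, pd u 0 p + ∑ a : Fin n, L a p * pd u a.succ p = 0)
    (hpos : ∀ p ∈ Ω, 0 < pd u 0 p) :
    ContDiffOn ℝ 1 (fun p => 1 / pd u 0 p) Ω ∧
    ∀ p ∈ Ω,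
      (pd (fun q => 1 / pd u 0 q) 0 p
            + ∑ b : Fin n, L b p * pd (fun q => 1 / pd u 0 q) b.succ p
          = (∑ a : Fin n,
              ((1 / pd u 0 p) * ∑ b : Fin n, (-L b p) * pd (L a) b.succ p)
                * ((1 / pd u 0 p) * pd u a.succ p))
            + (1 / pd u 0 p)
              * ∑ a : Fin n,
                  (pd (L a) 0 p + ∑ b : Fin n, L b p * pd (L a) b.succ p)
                    * ((1 / pd u 0 p) * pd u a.succ p)) ∧
      (pd (fun q => 1 / pd u 0 q) 0 p
            + ∑ b : Fin n, L b p * pd (fun q => 1 / pd u 0 q) b.succ p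
          = (1 / pd u 0 p) ^ 2 * ∑ a : Fin n, pd (L a) 0 p * pd u a.succ p) :=
  mu_transport_equation_general Ω hΩ L u hu hL heik hpos
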